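/- arXiv:1508.05162 — 6 statements merged into one kernel-verified Lean document; each statement's English description precedes it below -/
import Mathlib

section
/- Let a be a real number with B_0(a) > 0 and E_1(a) well defined (A_2(a)A_0(a) − A_1(a)² ≥ 0), and suppose D_0(z) ≠ 0 for all non-real z in some punctured neighborhood of a. Then F has a jump discontinuity across the real axis at a: the limit of F(z) as z → a with Im(z) > 0 equals (B_1(a) − i E_1(a)) / B_0(a), and the limit of F(z) as z → a with Im(z) < 0 equals (B_1(a) + i E_1(a)) / B_0(a). -/
/-!
Off the real axis write `f j z = R j + i y Q j` with `y = Im z`, `R j = Re f j z` and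
`Q j = Im f j z / y`. As `z → a`, `R → f(a)`, and `Q → f'(a)` by strict differentiability of `f`
at the real point `a` (where `f(Re z)` is real). In these coordinates
`B₀² - |A₀|² = 4 y² Γ(R, Q)`, with `Γ` the Gram determinant, so `D₀ = 2 |y| √Γ` and
`F = (B₁ + (B₀ B₁ - conj A₀ A₁) / D₀) / (B₀ + D₀)`. Moreover
`(B₀ B₁ - conj A₀ A₁) / D₀ = sign y · (y ⟨ρ(R, Q), f'⟩ - i ⟨ρ(Q, R), f'⟩) / √Γ`, where
`ρ(R, Q) = |Q|² R - ⟨R, Q⟩ Q` has norm `|Q| √Γ`. By Cauchy–Schwarz the first term is `O(|y|)`,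
and since `⟨ρ(Q, R), Q⟩ = Γ` the second is `√Γ + O(|f' - Q|)`. Hence the quotient tends to
`-i sign(y) √Γ(f(a), f'(a)) = ∓ i E₁(a)`, while `D₀ → D₀(a) = 0`.
-/

open Complex ComplexConjugate Finset Filter Topology

lemma Complex.ofReal_comp_smul {ι : Type*} (c : ℝ) (w : ι → ℝ) :
    ofReal ∘ (c • w) = (c : ℂ) • (ofReal ∘ w) := by
  ext j; simp

section GramDet

variable {ι : Type*} [Fintype ι]

def gramDet (R Q : ι → ℝ) : ℝ := (R ⬝ᵥ R) * (Q ⬝ᵥ Q) - (R ⬝ᵥ Q) ^ 2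

/-- The rejection of `R` from `Q`, scaled by `Q ⬝ᵥ Q` so that no division occurs. -/
def rejection (R Q : ι → ℝ) : ι → ℝ := (Q ⬝ᵥ Q) • R - (R ⬝ᵥ Q) • Q

lemma gramDet_comm (R Q : ι → ℝ) : gramDet R Q = gramDet Q R := by
  simp only [gramDet, dotProduct_comm R Q]; ring

lemma gramDet_smul_right (R Q : ι → ℝ) (c : ℝ) : gramDet R (c • Q) = c ^ 2 * gramDet R Q := by
  simp only [gramDet, dotProduct_smul, smul_dotProduct, smul_eq_mul]; ring

lemma rejection_smul_right (R Q : ι → ℝ) (c : ℝ) :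
    rejection R (c • Q) = c ^ 2 • rejection R Q := by
  ext j
  simp only [rejection, dotProduct_smul, smul_dotProduct, smul_eq_mul, Pi.sub_apply,
    Pi.smul_apply]
  ring

lemma rejection_smul_left (R Q : ι → ℝ) (c : ℝ) : rejection (c • Q) R = c • rejection Q R := by
  ext j
  simp only [rejection, smul_dotProduct, smul_eq_mul, Pi.sub_apply, Pi.smul_apply]
  ring

lemma rejection_dotProduct_self (R Q : ι → ℝ) :
    rejection R Q ⬝ᵥ rejection R Q = (Q ⬝ᵥ Q) * gramDet R Q := by
  simp only [rejection, gramDet, sub_dotProduct, dotProduct_sub, smul_dotProduct, dotProduct_smul,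
    smul_eq_mul, dotProduct_comm Q R]
  ring

lemma rejection_dotProduct_right (R Q : ι → ℝ) : rejection Q R ⬝ᵥ Q = gramDet R Q := by
  simp only [rejection, gramDet, sub_dotProduct, smul_dotProduct, smul_eq_mul,
    dotProduct_comm Q R]
  ring

lemma ofReal_comp_dotProduct (w v : ι → ℝ) :
    (ofReal ∘ w) ⬝ᵥ (ofReal ∘ v) = ((w ⬝ᵥ v : ℝ) : ℂ) := by
  simp [dotProduct]

lemma ofReal_comp_rejection_dotProduct (R Q : ι → ℝ) (P : ι → ℂ) :
    (ofReal ∘ rejection R Q) ⬝ᵥ P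
      = (Q ⬝ᵥ Q : ℝ) * ((ofReal ∘ R) ⬝ᵥ P) - (R ⬝ᵥ Q : ℝ) * ((ofReal ∘ Q) ⬝ᵥ P) := by
  simp [rejection, dotProduct, sub_mul, sum_sub_distrib, mul_sum, mul_assoc]

lemma norm_ofReal_comp_dotProduct_le (w : ι → ℝ) (P : ι → ℂ) :
    ‖(ofReal ∘ w) ⬝ᵥ P‖ ≤ √(w ⬝ᵥ w) * √(∑ j, ‖P j‖ ^ 2) := calc
  ‖(ofReal ∘ w) ⬝ᵥ P‖ ≤ ∑ j, |w j| * ‖P j‖ := by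
    simpa [dotProduct] using norm_sum_le univ fun j => (w j : ℂ) * P j
  _ ≤ √(∑ j, |w j| ^ 2) * √(∑ j, ‖P j‖ ^ 2) := Real.sum_mul_le_sqrt_mul_sqrt _ _ _
  _ = √(w ⬝ᵥ w) * √(∑ j, ‖P j‖ ^ 2) := by simp [dotProduct, sq]

lemma norm_rejection_dotProduct_div_le (R Q : ι → ℝ) (P : ι → ℂ) :
    ‖(ofReal ∘ rejection R Q) ⬝ᵥ P / √(gramDet R Q)‖ ≤ √(Q ⬝ᵥ Q) * √(∑ j, ‖P j‖ ^ 2) := by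
  have hQ : 0 ≤ Q ⬝ᵥ Q := sum_nonneg fun j _ => mul_self_nonneg (Q j)
  have h := norm_ofReal_comp_dotProduct_le (rejection R Q) P
  rw [rejection_dotProduct_self, Real.sqrt_mul hQ] at h
  rw [norm_div, norm_real, Real.norm_of_nonneg (Real.sqrt_nonneg _)]
  exact div_le_of_le_mul₀ (Real.sqrt_nonneg _) (by positivity) (by linarith)

lemma continuous_gramDet : Continuous fun p : (ι → ℝ) × (ι → ℝ) => gramDet p.1 p.2 := by
  unfold gramDet; fun_prop

lemma Filter.Tendsto.gramDet {α : Type*} {l : Filter α} {R Q : α → ι → ℝ} {u v : ι → ℝ}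
    (hR : Tendsto R l (𝓝 u)) (hQ : Tendsto Q l (𝓝 v)) :
    Tendsto (fun t => _root_.gramDet (R t) (Q t)) l (𝓝 (_root_.gramDet u v)) :=
  (((continuous_gramDet (ι := ι)).tendsto (u, v)).comp (hR.prodMk_nhds hQ) :)

/-- At `x = R + i y Q` and `P = f'`, `(y / |y|) * rejectionQuotient y R Q P` equals
`(B₀ B₁ - conj A₀ A₁) / D₀`. -/
noncomputable def rejectionQuotient (y : ℝ) (R Q : ι → ℝ) (P : ι → ℂ) : ℂ :=
  (y * (ofReal ∘ rejection R Q) ⬝ᵥ P - I * (ofReal ∘ rejection Q R) ⬝ᵥ P) / √(gramDet R Q)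

lemma tendsto_rejectionQuotient {α : Type*} {l : Filter α} {y : α → ℝ} {R Q : α → ι → ℝ}
    {P : α → ι → ℂ} {u v : ι → ℝ} (hy : Tendsto y l (𝓝 0)) (hR : Tendsto R l (𝓝 u))
    (hQ : Tendsto Q l (𝓝 v)) (hP : Tendsto P l (𝓝 (ofReal ∘ v))) :
    Tendsto (fun t => rejectionQuotient (y t) (R t) (Q t) (P t)) l
      (𝓝 (-I * √(gramDet u v))) := by
  have hℓ2 : ∀ {P : α → ι → ℂ} {w : ι → ℂ}, Tendsto P l (𝓝 w) →
      Tendsto (fun t => √(∑ j, ‖P t j‖ ^ 2)) l (𝓝 √(∑ j, ‖w j‖ ^ 2)) := fun {P w} hP =>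
    (((show Continuous fun P : ι → ℂ => √(∑ j, ‖P j‖ ^ 2) by fun_prop).tendsto w).comp hP :)
  have hdot : ∀ {R : α → ι → ℝ} {u : ι → ℝ}, Tendsto R l (𝓝 u) →
      Tendsto (fun t => √(R t ⬝ᵥ R t)) l (𝓝 √(u ⬝ᵥ u)) := fun {R u} hR =>
    (((show Continuous fun R : ι → ℝ => √(R ⬝ᵥ R) by fun_prop).tendsto u).comp hR :)
  have hX : Tendsto (fun t => y t * ((ofReal ∘ rejection (R t) (Q t)) ⬝ᵥ P t)
      / √(gramDet (R t) (Q t))) l (𝓝 0) := by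
    refine squeeze_zero_norm (fun t => ?_)
      (by simpa using hy.norm.mul ((hdot hQ).mul (hℓ2 hP)))
    rw [mul_div_assoc, norm_mul, norm_real]
    exact mul_le_mul_of_nonneg_left (norm_rejection_dotProduct_div_le _ _ _) (norm_nonneg _)
  have hZ : Tendsto (fun t => ((ofReal ∘ rejection (Q t) (R t)) ⬝ᵥ (P t - ofReal ∘ Q t))
      / √(gramDet (R t) (Q t))) l (𝓝 0) := by
    have hc : Continuous fun w : ι → ℝ => ofReal ∘ w := continuous_pi fun j => by fun_prop
    have hPQ : Tendsto (fun t => P t - ofReal ∘ Q t) l (𝓝 0) := by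
      simpa using hP.sub ((hc.tendsto v).comp hQ)
    refine squeeze_zero_norm (fun t => ?_) (by simpa using (hdot hR).mul (hℓ2 hPQ))
    rw [gramDet_comm]
    exact norm_rejection_dotProduct_div_le _ _ _
  have hY : ∀ t, (ofReal ∘ rejection (Q t) (R t)) ⬝ᵥ P t = gramDet (R t) (Q t)
      + (ofReal ∘ rejection (Q t) (R t)) ⬝ᵥ (P t - ofReal ∘ Q t) := fun t => by
    rw [dotProduct_sub, ofReal_comp_dotProduct, rejection_dotProduct_right, add_sub_cancel]
  have := hX.sub ((((continuous_ofReal.tendsto _).comp (hR.gramDet hQ).sqrt).add hZ).const_mul I)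
  rw [zero_sub, add_zero, ← neg_mul] at this
  refine this.congr fun t => ?_
  rw [rejectionQuotient, hY, sub_div, mul_div_assoc I, add_div, ← ofReal_div, Real.div_sqrt]
  rfl

end GramDet

section Coordinates

variable {ι : Type*} [Fintype ι] (x P : ι → ℂ)

lemma sum_norm_sq_eq : ∑ j, ‖x j‖ ^ 2 = (re ∘ x) ⬝ᵥ (re ∘ x) + (im ∘ x) ⬝ᵥ (im ∘ x) := by
  simp [dotProduct, Complex.sq_norm, normSq_apply, sum_add_distrib]

lemma sum_sq_eq : ∑ j, x j ^ 2
    = ((re ∘ x) ⬝ᵥ (re ∘ x) - (im ∘ x) ⬝ᵥ (im ∘ x) : ℝ) + (2 * (re ∘ x) ⬝ᵥ (im ∘ x) : ℝ) * I := by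
  apply Complex.ext
  · simp [dotProduct, re_sum, sq, sum_sub_distrib]
  · simp [dotProduct, im_sum, sq, mul_sum, mul_comm, ← two_mul]

lemma sum_mul_eq : ∑ j, x j * P j = (ofReal ∘ re ∘ x) ⬝ᵥ P + I * (ofReal ∘ im ∘ x) ⬝ᵥ P := by
  simp only [dotProduct, mul_sum, ← sum_add_distrib, Function.comp_apply]
  refine sum_congr rfl fun j _ => ?_
  nth_rw 1 [← re_add_im (x j)]
  ring

lemma sum_conj_mul_eq :
    ∑ j, conj (x j) * P j = (ofReal ∘ re ∘ x) ⬝ᵥ P - I * (ofReal ∘ im ∘ x) ⬝ᵥ P := by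
  simp only [dotProduct, mul_sum, ← sum_sub_distrib, Function.comp_apply]
  refine sum_congr rfl fun j _ => ?_
  rw [show conj (x j) = (x j).re - (x j).im * I by apply Complex.ext <;> simp]
  ring

lemma sq_sum_norm_sq_sub_norm_sq_sum_sq :
    (∑ j, ‖x j‖ ^ 2) ^ 2 - ‖∑ j, x j ^ 2‖ ^ 2 = 4 * gramDet (re ∘ x) (im ∘ x) := by
  rw [sum_norm_sq_eq, sum_sq_eq, Complex.sq_norm, normSq_add_mul_I, gramDet]
  ring

lemma numerator_eq :
    ((∑ j, ‖x j‖ ^ 2 : ℝ) : ℂ) * ∑ j, conj (x j) * P j - conj (∑ j, x j ^ 2) * ∑ j, x j * P j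
      = 2 * ((ofReal ∘ rejection (re ∘ x) (im ∘ x)) ⬝ᵥ P
        - I * (ofReal ∘ rejection (im ∘ x) (re ∘ x)) ⬝ᵥ P) := by
  rw [sum_norm_sq_eq, sum_sq_eq, sum_conj_mul_eq, sum_mul_eq, ofReal_comp_rejection_dotProduct,
    ofReal_comp_rejection_dotProduct, dotProduct_comm (im ∘ x) (re ∘ x)]
  simp only [map_add, map_mul, conj_ofReal, conj_I]
  push_cast
  linear_combination 2 * ((ofReal ∘ im ∘ x) ⬝ᵥ P) * (((re ∘ x) ⬝ᵥ (im ∘ x) : ℝ) : ℂ) * I_sq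

lemma numerator_div_sqrt_eq {y : ℝ} {Q : ι → ℝ} (hQ : im ∘ x = y • Q) :
    (((∑ j, ‖x j‖ ^ 2 : ℝ) : ℂ) * ∑ j, conj (x j) * P j - conj (∑ j, x j ^ 2) * ∑ j, x j * P j)
        / √((∑ j, ‖x j‖ ^ 2) ^ 2 - ‖∑ j, x j ^ 2‖ ^ 2)
      = (y / |y| : ℝ) * rejectionQuotient y (re ∘ x) Q P := by
  have hsqrt : √(4 * (y ^ 2 * gramDet (re ∘ x) Q)) = 2 * (|y| * √(gramDet (re ∘ x) Q)) := by
    rw [Real.sqrt_mul (by norm_num), Real.sqrt_mul (sq_nonneg y), Real.sqrt_sq_eq_abs,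
      show √(4 : ℝ) = 2 by norm_num]
  rw [numerator_eq, sq_sum_norm_sq_sub_norm_sq_sum_sq, hQ, rejection_smul_right,
    rejection_smul_left, gramDet_smul_right, hsqrt, ofReal_comp_smul, ofReal_comp_smul,
    smul_dotProduct, smul_dotProduct, rejectionQuotient]
  push_cast
  rw [div_mul_div_comm, ← mul_div_mul_left _ _ (two_ne_zero (α := ℂ))]
  ring

lemma re_sum_sq_mul_sum_sq_sub_sq {p : ι → ℂ} (hx : ∀ j, (x j).im = 0) (hp : ∀ j, (p j).im = 0) :
    ((∑ j, p j ^ 2) * (∑ j, x j ^ 2) - (∑ j, x j * p j) ^ 2).re = gramDet (re ∘ x) (re ∘ p) := by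
  have hreal : ∀ {w : ι → ℂ}, (∀ j, (w j).im = 0) → w = ofReal ∘ re ∘ w := fun hw =>
    funext fun j => Complex.ext (by simp) (by simp [hw])
  rw [hreal hx, hreal hp]
  simp only [Function.comp_apply, sq, ← ofReal_mul, ← ofReal_sum, ← ofReal_sub, ofReal_re,
    gramDet, dotProduct]
  ring

end Coordinates

lemma div_eq_add_div_of_eq_sqrt {b₀ d : ℝ} {a₀ a₁ b₁ : ℂ} (hd : d = √(b₀ ^ 2 - ‖a₀‖ ^ 2))
    (hd₀ : d ≠ 0) (hb₀ : 0 ≤ b₀) :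
    (b₁ * d + b₀ * b₁ - conj a₀ * a₁) / (b₀ * d + b₀ ^ 2 - conj a₀ * a₀)
      = (b₁ + (b₀ * b₁ - conj a₀ * a₁) / d) / (b₀ + d) := by
  have hpos : 0 < d := lt_of_le_of_ne (hd ▸ Real.sqrt_nonneg _) hd₀.symm
  have hsq : (d : ℂ) ^ 2 = b₀ ^ 2 - ‖a₀‖ ^ 2 := by
    exact_mod_cast hd ▸ Real.sq_sqrt (Real.sqrt_ne_zero'.1 (hd ▸ hd₀)).le
  have hden : (b₀ * d + b₀ ^ 2 - conj a₀ * a₀ : ℂ) = d * (b₀ + d) := by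
    rw [conj_mul']
    linear_combination -hsq
  have hbd : (b₀ + d : ℂ) ≠ 0 := by exact_mod_cast (by positivity : b₀ + d ≠ 0)
  have hd' : (d : ℂ) ≠ 0 := ofReal_ne_zero.2 hd₀
  rw [hden]
  field_simp
  ring

lemma HasDerivAt.im_eq_zero_of_real {f : ℂ → ℂ} {d : ℂ} {a : ℝ} (hf : HasDerivAt f d a)
    (hreal : ∀ x : ℝ, (f x).im = 0) : d.im = 0 := by
  have h := (hf.const_mul (-I)).real_of_complex
  simp only [neg_mul, neg_re, mul_re, I_re, zero_mul, I_im, one_mul, zero_sub, neg_neg, hreal] at h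
  exact h.unique (hasDerivAt_const _ _)

lemma HasStrictDerivAt.tendsto_im_div_im {f : ℂ → ℂ} {d : ℂ} {a : ℝ}
    (hf : HasStrictDerivAt f d a) (hreal : ∀ x : ℝ, (f x).im = 0) :
    Tendsto (fun z => (f z).im / z.im) (𝓝[{z | z.im ≠ 0}] (a : ℂ)) (𝓝 d.re) := by
  have hre : Tendsto (fun z : ℂ => (z, (z.re : ℂ))) (𝓝[{z | z.im ≠ 0}] (a : ℂ)) (𝓝 (a, a)) :=
    ((continuous_id.prodMk (continuous_ofReal.comp continuous_re)).tendsto' _ _ (by simp)).mono_left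
      nhdsWithin_le_nhds
  have h := ((hasDerivAtFilter_iff_isLittleO.1 hf).comp_tendsto hre).tendsto_div_nhds_zero
  have := (continuous_re.tendsto _).comp (h.add_const d)
  rw [zero_add] at this
  refine this.congr' (eventually_mem_nhdsWithin.mono fun z hz => ?_)
  have hz' : z - z.re = z.im * I := by apply Complex.ext <;> simp
  have hzI : (z.im : ℂ) * I ≠ 0 := mul_ne_zero (ofReal_ne_zero.2 hz) I_ne_zero
  have hslope :
      (f z - f z.re - (z - z.re) • d) / (z - z.re) + d = (f z - f z.re) / (z.im * I) := by
    rw [hz', smul_eq_mul, sub_div _ (_ * d), mul_div_cancel_left₀ _ hzI, sub_add_cancel]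
  simp only [Function.comp_apply, hslope]
  rw [← div_div, div_I, neg_re, mul_I_re, neg_neg, div_ofReal_im, sub_im, hreal, sub_zero]

section EntireFamily

variable {ι : Type*} [Fintype ι] {f : ι → ℂ → ℂ}

lemma tendsto_rejectionQuotient_nhdsWithin_im_ne_zero (hf : ∀ j, Differentiable ℂ (f j))
    (hreal : ∀ j, ∀ x : ℝ, (f j x).im = 0) (a : ℝ) :
    Tendsto (fun z => rejectionQuotient z.im (re ∘ (f · z)) (fun j => (f j z).im / z.im)
        (fun j => deriv (f j) z)) (𝓝[{z | z.im ≠ 0}] (a : ℂ))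
      (𝓝 (-I * √(gramDet (re ∘ (f · a)) (re ∘ fun j => deriv (f j) a)))) := by
  refine tendsto_rejectionQuotient ?_ (tendsto_pi_nhds.2 fun j => ?_)
    (tendsto_pi_nhds.2 fun j => ?_) (tendsto_pi_nhds.2 fun j => ?_)
  · simpa using (continuous_im.tendsto (a : ℂ)).mono_left nhdsWithin_le_nhds
  · exact ((continuous_re.comp (hf j).continuous).tendsto _).mono_left nhdsWithin_le_nhds
  · exact ((hf j).analyticAt a).hasStrictDerivAt.tendsto_im_div_im (hreal j)
  · have h := ((hf j) a).hasDerivAt.im_eq_zero_of_real (hreal j)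
    simp only [Function.comp_apply, show ((deriv (f j) a).re : ℂ) = deriv (f j) a from
      Complex.ext (by simp) (by simp [h])]
    exact (((hf j).contDiff (n := 1)).continuous_deriv le_rfl).tendsto _ |>.mono_left
      nhdsWithin_le_nhds

lemma tendsto_B0_add_D0 (hf : ∀ j, Differentiable ℂ (f j)) (hreal : ∀ j, ∀ x : ℝ, (f j x).im = 0)
    {A0 : ℂ → ℂ} {B0 D0 : ℂ → ℝ} (hA0 : ∀ z, A0 z = ∑ j, (f j z) ^ 2)
    (hB0 : ∀ z, B0 z = ∑ j, ‖f j z‖ ^ 2) (hD0 : ∀ z, D0 z = √((B0 z) ^ 2 - ‖A0 z‖ ^ 2)) (a : ℝ) :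
    Tendsto (fun z => (B0 z + D0 z : ℂ)) (𝓝 (a : ℂ)) (𝓝 (B0 a)) := by
  have hB0c : Continuous B0 := by
    rw [funext hB0]
    exact continuous_finsetSum _ fun j _ => (hf j).continuous.norm.pow 2
  have hD0c : Continuous D0 := by
    rw [funext hD0, funext hA0]
    exact ((hB0c.pow 2).sub
      ((continuous_finsetSum _ fun j _ => (hf j).continuous.pow 2).norm.pow 2)).sqrt
  have hD0a : D0 a = 0 := by
    rw [hD0, hB0, hA0, sq_sum_norm_sq_sub_norm_sq_sum_sq (f · a),
      show im ∘ (f · a) = 0 from funext (hreal · a)]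
    simp [gramDet]
  simpa [hD0a] using (show Continuous fun z => (B0 z + D0 z : ℂ) by fun_prop).tendsto a

lemma eventually_F_eq {A0 A1 B1 F : ℂ → ℂ} {B0 D0 : ℂ → ℝ}
    (hA0 : ∀ z, A0 z = ∑ j, (f j z) ^ 2)
    (hA1 : ∀ z, A1 z = ∑ j, f j z * deriv (f j) z)
    (hB1 : ∀ z, B1 z = ∑ j, conj (f j z) * deriv (f j) z)
    (hB0 : ∀ z, B0 z = ∑ j, ‖f j z‖ ^ 2)
    (hD0 : ∀ z, D0 z = √((B0 z) ^ 2 - ‖A0 z‖ ^ 2))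
    (hF : ∀ z, F z = (B1 z * (D0 z : ℂ) + (B0 z : ℂ) * B1 z - conj (A0 z) * A1 z)
        / ((B0 z : ℂ) * (D0 z : ℂ) + (B0 z : ℂ) ^ 2 - conj (A0 z) * A0 z))
    {a : ℂ} (hD0near : ∃ U ∈ 𝓝 a, ∀ z ∈ U, z.im ≠ 0 → D0 z ≠ 0) :
    ∀ᶠ z in 𝓝[{z | z.im ≠ 0}] a, F z = (B1 z + (z.im / |z.im| : ℝ)
      * rejectionQuotient z.im (re ∘ (f · z)) (fun j => (f j z).im / z.im)
        (fun j => deriv (f j) z)) / (B0 z + D0 z) := by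
  obtain ⟨U, hU, hUD⟩ := hD0near
  filter_upwards [nhdsWithin_le_nhds hU, self_mem_nhdsWithin] with z hzU hz
  have hQ : im ∘ (f · z) = z.im • fun j => (f j z).im / z.im := by
    ext j; simp [mul_div_cancel₀ _ hz]
  rw [hF z, div_eq_add_div_of_eq_sqrt (hD0 z) (hUD z hzU hz) (hB0 z ▸ by positivity),
    ← numerator_div_sqrt_eq _ _ hQ, hD0 z, hB0 z, hA0 z, hB1 z, hA1 z]

lemma tendsto_F_nhdsWithin (hf : ∀ j, Differentiable ℂ (f j))
    (hreal : ∀ j, ∀ x : ℝ, (f j x).im = 0) {A0 A1 B1 F : ℂ → ℂ} {B0 D0 : ℂ → ℝ}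
    (hA0 : ∀ z, A0 z = ∑ j, (f j z) ^ 2)
    (hA1 : ∀ z, A1 z = ∑ j, f j z * deriv (f j) z)
    (hB1 : ∀ z, B1 z = ∑ j, conj (f j z) * deriv (f j) z)
    (hB0 : ∀ z, B0 z = ∑ j, ‖f j z‖ ^ 2)
    (hD0 : ∀ z, D0 z = √((B0 z) ^ 2 - ‖A0 z‖ ^ 2))
    (hF : ∀ z, F z = (B1 z * (D0 z : ℂ) + (B0 z : ℂ) * B1 z - conj (A0 z) * A1 z)
        / ((B0 z : ℂ) * (D0 z : ℂ) + (B0 z : ℂ) ^ 2 - conj (A0 z) * A0 z))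
    {a : ℝ} (hB0a : 0 < B0 a) (hD0near : ∃ U ∈ 𝓝 (a : ℂ), ∀ z ∈ U, z.im ≠ 0 → D0 z ≠ 0)
    {S : Set ℂ} {σ : ℝ} (hS : S ⊆ {z | z.im ≠ 0}) (hσ : ∀ z ∈ S, z.im / |z.im| = σ) :
    Tendsto F (𝓝[S] (a : ℂ)) (𝓝 ((B1 a + σ * (-I *
      √(gramDet (re ∘ (f · a)) (re ∘ fun j => deriv (f j) a)))) / B0 a)) := by
  have hl : 𝓝[S] (a : ℂ) ≤ 𝓝[{z | z.im ≠ 0}] (a : ℂ) := nhdsWithin_mono _ hS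
  have hB1c : Continuous B1 := by
    rw [funext hB1]
    exact continuous_finsetSum _ fun j _ => (continuous_conj.comp (hf j).continuous).mul
      (((hf j).contDiff (n := 1)).continuous_deriv le_rfl)
  have hlim := (((hB1c.tendsto a).mono_left nhdsWithin_le_nhds).add
    (((tendsto_rejectionQuotient_nhdsWithin_im_ne_zero hf hreal a).mono_left hl).const_mul
      (σ : ℂ))).div ((tendsto_B0_add_D0 hf hreal hA0 hB0 hD0 a).mono_left nhdsWithin_le_nhds)
    (ofReal_ne_zero.2 hB0a.ne')
  refine hlim.congr' ?_
  filter_upwards [hl (eventually_F_eq hA0 hA1 hB1 hB0 hD0 hF hD0near), self_mem_nhdsWithin]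
    with z hz hzS
  rw [hz, hσ z hzS]
  rfl

end EntireFamily

theorem F_jump_discontinuity_general
    {n : ℕ} (f : Fin (n + 1) → ℂ → ℂ)
    (hf_entire : ∀ j, Differentiable ℂ (f j))
    (hf_real : ∀ j, ∀ x : ℝ, (f j (x : ℂ)).im = 0)
    (A0 A1 A2 B1 : ℂ → ℂ) (B0 D0 : ℂ → ℝ) (E1 : ℝ → ℝ) (F : ℂ → ℂ)
    (hA0 : ∀ z, A0 z = ∑ j, (f j z) ^ 2)
    (hA1 : ∀ z, A1 z = ∑ j, f j z * deriv (f j) z)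
    (hA2 : ∀ z, A2 z = ∑ j, (deriv (f j) z) ^ 2)
    (hB1 : ∀ z, B1 z = ∑ j, (starRingEnd ℂ) (f j z) * deriv (f j) z)
    (hB0 : ∀ z, B0 z = ∑ j, ‖f j z‖ ^ 2)
    (hD0 : ∀ z, D0 z = Real.sqrt ((B0 z) ^ 2 - ‖A0 z‖ ^ 2))
    (hE1 : ∀ x : ℝ, E1 x = Real.sqrt ((A2 (x : ℂ) * A0 (x : ℂ) - (A1 (x : ℂ)) ^ 2).re))
    (hF : ∀ z, F z = (B1 z * (D0 z : ℂ) + (B0 z : ℂ) * B1 z - (starRingEnd ℂ) (A0 z) * A1 z)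
        / ((B0 z : ℂ) * (D0 z : ℂ) + (B0 z : ℂ) ^ 2 - (starRingEnd ℂ) (A0 z) * A0 z))
    (a : ℝ)
    (hB0a : 0 < B0 (a : ℂ))
    (hD0near : ∃ U ∈ 𝓝 (a : ℂ), ∀ z ∈ U, z.im ≠ 0 → D0 z ≠ 0) :
    Tendsto F (𝓝[{z : ℂ | 0 < z.im}] (a : ℂ))
        (𝓝 ((B1 (a : ℂ) - I * (E1 a : ℂ)) / (B0 (a : ℂ) : ℂ))) ∧
    Tendsto F (𝓝[{z : ℂ | z.im < 0}] (a : ℂ))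
        (𝓝 ((B1 (a : ℂ) + I * (E1 a : ℂ)) / (B0 (a : ℂ) : ℂ))) := by
  have hE : E1 a = √(gramDet (re ∘ (f · a)) (re ∘ fun j => deriv (f j) a)) := by
    rw [hE1, hA2, hA0, hA1, re_sum_sq_mul_sum_sq_sub_sq (f · a) (hf_real · a)
      fun j => ((hf_entire j) a).hasDerivAt.im_eq_zero_of_real (hf_real j)]
  rw [hE]
  constructor
  · simpa [← sub_eq_add_neg] using tendsto_F_nhdsWithin hf_entire hf_real hA0 hA1 hB1 hB0 hD0 hF
      hB0a hD0near (S := {z | 0 < z.im}) (σ := 1) (fun z (hz : 0 < z.im) => hz.ne')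
      fun z (hz : 0 < z.im) => by simp [abs_of_pos hz, hz.ne']
  · simpa using tendsto_F_nhdsWithin hf_entire hf_real hA0 hA1 hB1 hB0 hD0 hF
      hB0a hD0near (S := {z | z.im < 0}) (σ := -1) (fun z (hz : z.im < 0) => hz.ne)
      fun z (hz : z.im < 0) => by simp [abs_of_neg hz, hz.ne]

/-- **Lemma 2 (Vanderbei).** The function `F` has a jump discontinuity across the real axis:
at a real point `a` (with `B₀(a) > 0`, `E₁(a)` well defined, and `D₀ ≠ 0` on nearby non-real
points), `F(z) → (B₁(a) − i E₁(a))/B₀(a)` as `z → a` from the upper half-plane and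
`F(z) → (B₁(a) + i E₁(a))/B₀(a)` as `z → a` from the lower half-plane. -/
theorem F_jump_discontinuity
    {n : ℕ} (f : Fin (n + 1) → ℂ → ℂ)
    (hf_entire : ∀ j, Differentiable ℂ (f j))
    (hf_real : ∀ j, ∀ x : ℝ, (f j (x : ℂ)).im = 0)
    (A0 A1 A2 B1 : ℂ → ℂ) (B0 D0 : ℂ → ℝ) (E1 : ℝ → ℝ) (F : ℂ → ℂ)
    (hA0 : ∀ z, A0 z = ∑ j, (f j z) ^ 2)
    (hA1 : ∀ z, A1 z = ∑ j, f j z * deriv (f j) z)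
    (hA2 : ∀ z, A2 z = ∑ j, (deriv (f j) z) ^ 2)
    (hB1 : ∀ z, B1 z = ∑ j, (starRingEnd ℂ) (f j z) * deriv (f j) z)
    (hB0 : ∀ z, B0 z = ∑ j, ‖f j z‖ ^ 2)
    (hD0 : ∀ z, D0 z = Real.sqrt ((B0 z) ^ 2 - ‖A0 z‖ ^ 2))
    (hE1 : ∀ x : ℝ, E1 x = Real.sqrt ((A2 (x : ℂ) * A0 (x : ℂ) - (A1 (x : ℂ)) ^ 2).re))
    (hF : ∀ z, F z = (B1 z * (D0 z : ℂ) + (B0 z : ℂ) * B1 z - (starRingEnd ℂ) (A0 z) * A1 z)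
        / ((B0 z : ℂ) * (D0 z : ℂ) + (B0 z : ℂ) ^ 2 - (starRingEnd ℂ) (A0 z) * A0 z))
    (a : ℝ)
    (hB0a : 0 < B0 (a : ℂ))
    (hE1a : 0 ≤ (A2 (a : ℂ) * A0 (a : ℂ) - (A1 (a : ℂ)) ^ 2).re)
    (hE1a' : (A2 (a : ℂ) * A0 (a : ℂ) - (A1 (a : ℂ)) ^ 2).im = 0)
    (hD0near : ∃ U ∈ 𝓝 (a : ℂ), ∀ z ∈ U, z.im ≠ 0 → D0 z ≠ 0) :
    Tendsto F (𝓝[{z : ℂ | 0 < z.im}] (a : ℂ))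
        (𝓝 ((B1 (a : ℂ) - I * (E1 a : ℂ)) / (B0 (a : ℂ) : ℂ))) ∧
    Tendsto F (𝓝[{z : ℂ | z.im < 0}] (a : ℂ))
        (𝓝 ((B1 (a : ℂ) + I * (E1 a : ℂ)) / (B0 (a : ℂ) : ℂ))) :=
  F_jump_discontinuity_general f hf_entire hf_real A0 A1 A2 B1 B0 D0 E1 F hA0 hA1 hA2 hB1 hB0 hD0
    hE1 hF a hB0a hD0near
end

section
/- At every point z ∈ ℂ with D_0(z) ≠ 0, the function F, regarded as a smooth function of the real coordinates (x, y) with z = x + iy, satisfies the Wirtinger-derivative identity (1/2)(∂F/∂x + i ∂F/∂y)(z) = [B_2(z) D_0(z)² − B_0(z)(|A_1(z)|² + |B_1(z)|²) + A_0(z) conj(A_1(z)) B_1(z) + conj(A_0(z)) A_1(z) conj(B_1(z))] / D_0(z)³. -/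
/-!
Write a real derivative `w ↦ p w + q w̄` of a function `ℂ → ℂ` as the pair of Wirtinger
derivatives `(∂/∂z, ∂/∂z̄) = (p, q)`; these propagate through sums, products, conjugation, quotients
and square roots of real functions by the usual rules. Since the `f_j` are holomorphic,
`∂̄A₀ = ∂̄A₁ = 0`, `∂̄B₀ = B̄₁`, `∂̄B₁ = B₂`, and differentiating `D₀² = B₀² - |A₀|²` gives
`∂̄D₀ = (B₀ B̄₁ - A₀ Ā₁) / D₀`. The quotient rule then yields `∂̄F`, and the same relation, which
also turns the denominator into `D₀ (B₀ + D₀)`, collapses it to the stated closed form.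
-/

open Complex ComplexConjugate Finset

noncomputable def wirtingerCLM (p q : ℂ) : ℂ →L[ℝ] ℂ :=
  p • ContinuousLinearMap.id ℝ ℂ + q • conjCLE.toContinuousLinearMap

@[simp]
theorem wirtingerCLM_apply (p q w : ℂ) : wirtingerCLM p q w = p * w + q * conj w := by
  simp [wirtingerCLM]

/-- `g` is real-differentiable at `z`, with Wirtinger derivatives `∂g/∂z = p` and `∂g/∂z̄ = q`. -/
def HasWirtingerDerivAt (g : ℂ → ℂ) (p q z : ℂ) : Prop :=
  HasFDerivAt g (wirtingerCLM p q) z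

theorem HasDerivAt.hasWirtingerDerivAt {g : ℂ → ℂ} {g' z : ℂ} (h : HasDerivAt g g' z) :
    HasWirtingerDerivAt g g' 0 z :=
  (h.hasFDerivAt.restrictScalars ℝ).congr_fderiv <| by ext w; simp [mul_comm]

theorem DifferentiableAt.hasWirtingerDerivAt {g : ℂ → ℂ} {z : ℂ} (h : DifferentiableAt ℂ g z) :
    HasWirtingerDerivAt g (deriv g z) 0 z :=
  h.hasDerivAt.hasWirtingerDerivAt

namespace HasWirtingerDerivAt

variable {g u v : ℂ → ℂ} {p q p' q' p₁ q₁ p₂ q₂ z : ℂ}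

theorem congr_deriv (h : HasWirtingerDerivAt g p q z) (hp : p = p') (hq : q = q') :
    HasWirtingerDerivAt g p' q' z :=
  hp ▸ hq ▸ h

theorem differentiableAt (h : HasWirtingerDerivAt g p q z) : DifferentiableAt ℝ g z :=
  HasFDerivAt.differentiableAt h

theorem half_mul_fderiv_one_add_I_mul_fderiv_I (h : HasWirtingerDerivAt g p q z) :
    (1 / 2 : ℂ) * (fderiv ℝ g z 1 + I * fderiv ℝ g z I) = q := by
  rw [HasFDerivAt.fderiv h]
  simp only [wirtingerCLM_apply, map_one, conj_I]
  linear_combination (p - q) / 2 * I_sq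

theorem _root_.HasWirtingerDerivAt.conj (h : HasWirtingerDerivAt g p q z) :
    HasWirtingerDerivAt (fun w => conj (g w)) (conj q) (conj p) z :=
  (conjCLE.toContinuousLinearMap.hasFDerivAt.comp z h).congr_fderiv <| by
    ext w; simp [add_comm]

theorem add (hu : HasWirtingerDerivAt u p₁ q₁ z) (hv : HasWirtingerDerivAt v p₂ q₂ z) :
    HasWirtingerDerivAt (fun w => u w + v w) (p₁ + p₂) (q₁ + q₂) z :=
  (HasFDerivAt.add hu hv).congr_fderiv <| by ext w; simp; ring

theorem sub (hu : HasWirtingerDerivAt u p₁ q₁ z) (hv : HasWirtingerDerivAt v p₂ q₂ z) :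
    HasWirtingerDerivAt (fun w => u w - v w) (p₁ - p₂) (q₁ - q₂) z :=
  (HasFDerivAt.sub hu hv).congr_fderiv <| by ext w; simp; ring

theorem mul (hu : HasWirtingerDerivAt u p₁ q₁ z) (hv : HasWirtingerDerivAt v p₂ q₂ z) :
    HasWirtingerDerivAt (fun w => u w * v w) (p₁ * v z + u z * p₂) (q₁ * v z + u z * q₂) z :=
  (HasFDerivAt.mul hu hv).congr_fderiv <| by ext w; simp; ring

theorem pow (hu : HasWirtingerDerivAt u p q z) (m : ℕ) :
    HasWirtingerDerivAt (fun w => u w ^ m) (m * u z ^ (m - 1) * p) (m * u z ^ (m - 1) * q) z :=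
  (HasFDerivAt.pow hu m).congr_fderiv <| by ext w; simp; ring

theorem inv (hv : HasWirtingerDerivAt v p q z) (hvz : v z ≠ 0) :
    HasWirtingerDerivAt (fun w => (v w)⁻¹) (-p / v z ^ 2) (-q / v z ^ 2) z :=
  ((hasFDerivAt_inv' (𝕜 := ℝ) hvz).comp z hv).congr_fderiv <| by
    ext w; simp; field_simp; ring

theorem div (hu : HasWirtingerDerivAt u p₁ q₁ z) (hv : HasWirtingerDerivAt v p₂ q₂ z)
    (hvz : v z ≠ 0) :
    HasWirtingerDerivAt (fun w => u w / v w) ((p₁ * v z - u z * p₂) / v z ^ 2)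
      ((q₁ * v z - u z * q₂) / v z ^ 2) z := by
  simp only [div_eq_mul_inv]
  refine (hu.mul (hv.inv hvz)).congr_deriv ?_ ?_ <;> field_simp <;> ring

theorem sum {ι : Type*} (s : Finset ι) {g : ι → ℂ → ℂ} {p q : ι → ℂ}
    (h : ∀ i ∈ s, HasWirtingerDerivAt (g i) (p i) (q i) z) :
    HasWirtingerDerivAt (fun w => ∑ i ∈ s, g i w) (∑ i ∈ s, p i) (∑ i ∈ s, q i) z :=
  (HasFDerivAt.fun_sum h).congr_fderiv <| by
    ext w; simp [sum_mul, sum_add_distrib]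

theorem ofReal_sqrt {b : ℂ → ℝ} (h : HasWirtingerDerivAt (fun w => (b w : ℂ)) p (conj p) z)
    (hb : 0 < b z) :
    HasWirtingerDerivAt (fun w => (√(b w) : ℂ)) (p / (2 * √(b z))) (conj p / (2 * √(b z))) z := by
  have hre : HasFDerivAt b (reCLM ∘L wirtingerCLM p (conj p)) z := by
    have hcomp := reCLM.hasFDerivAt.comp z h
    rwa [show (reCLM ∘ fun w => (b w : ℂ)) = b from funext fun w => by simp] at hcomp
  have hsqrt := (Real.hasDerivAt_sqrt hb.ne').comp_hasFDerivAt z hre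
  refine (ofRealCLM.hasFDerivAt.comp z hsqrt).congr_fderiv ?_
  ext w
  have hre_w : ((p * w + conj p * conj w).re : ℂ) = p * w + conj p * conj w := by
    rw [← map_mul, add_conj, ofReal_re]
  simp only [ContinuousLinearMap.comp_apply, smul_apply, wirtingerCLM_apply,
    reCLM_apply, ofRealCLM_apply, smul_eq_mul]
  push_cast
  rw [hre_w]
  ring

end HasWirtingerDerivAt

theorem HasWirtingerDerivAt.ofReal_sq_sub_norm_sq {b : ℂ → ℝ} {a : ℂ → ℂ} {pb pa z : ℂ}
    (hb : HasWirtingerDerivAt (fun w => (b w : ℂ)) pb (conj pb) z)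
    (ha : HasWirtingerDerivAt a pa 0 z) :
    HasWirtingerDerivAt (fun w => ((b w ^ 2 - ‖a w‖ ^ 2 : ℝ) : ℂ))
      (2 * b z * pb - conj (a z) * pa) (conj (2 * b z * pb - conj (a z) * pa)) z := by
  have hfun : (fun w => ((b w ^ 2 - ‖a w‖ ^ 2 : ℝ) : ℂ)) =
      fun w => (b w : ℂ) * b w - conj (a w) * a w := by
    ext w; push_cast; rw [conj_mul']; ring
  rw [hfun]
  refine ((hb.mul hb).sub (ha.conj.mul ha)).congr_deriv ?_ ?_ <;> simp [map_ofNat] <;> ring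

section Sums

variable {ι : Type*} (s : Finset ι) {f : ι → ℂ → ℂ} {z : ℂ}

theorem hasWirtingerDerivAt_sum_sq (hf : ∀ j ∈ s, DifferentiableAt ℂ (f j) z) :
    HasWirtingerDerivAt (fun w => ∑ j ∈ s, f j w ^ 2)
      (2 * ∑ j ∈ s, f j z * deriv (f j) z) 0 z := by
  simp only [sq]
  refine (HasWirtingerDerivAt.sum s fun j hj =>
    (hf j hj).hasWirtingerDerivAt.mul (hf j hj).hasWirtingerDerivAt).congr_deriv ?_ (by simp)
  rw [mul_sum]
  exact sum_congr rfl fun j _ => by ring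

theorem hasWirtingerDerivAt_ofReal_sum_norm_sq (hf : ∀ j ∈ s, DifferentiableAt ℂ (f j) z) :
    HasWirtingerDerivAt (fun w => ((∑ j ∈ s, ‖f j w‖ ^ 2 : ℝ) : ℂ))
      (∑ j ∈ s, conj (f j z) * deriv (f j) z)
      (conj (∑ j ∈ s, conj (f j z) * deriv (f j) z)) z := by
  have hfun : (fun w => ((∑ j ∈ s, ‖f j w‖ ^ 2 : ℝ) : ℂ)) =
      fun w => ∑ j ∈ s, conj (f j w) * f j w := by
    ext w; push_cast; exact sum_congr rfl fun j _ => (conj_mul' _).symm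
  rw [hfun]
  refine (HasWirtingerDerivAt.sum s fun j hj =>
    (hf j hj).hasWirtingerDerivAt.conj.mul (hf j hj).hasWirtingerDerivAt).congr_deriv ?_ ?_
  · simp
  · simp [map_sum, mul_comm]

theorem hasWirtingerDerivAt_sum_conj_mul_deriv (hf : ∀ j ∈ s, DifferentiableAt ℂ (f j) z)
    (hf' : ∀ j ∈ s, DifferentiableAt ℂ (deriv (f j)) z) :
    HasWirtingerDerivAt (fun w => ∑ j ∈ s, conj (f j w) * deriv (f j) w)
      (∑ j ∈ s, conj (f j z) * deriv (deriv (f j)) z)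
      ((∑ j ∈ s, ‖deriv (f j) z‖ ^ 2 : ℝ) : ℂ) z := by
  refine (HasWirtingerDerivAt.sum s fun j hj =>
    (hf j hj).hasWirtingerDerivAt.conj.mul (hf' j hj).hasWirtingerDerivAt).congr_deriv ?_ ?_
  · simp
  · push_cast; exact sum_congr rfl fun j _ => by simp [conj_mul']

end Sums

/-- The left side is what the quotient rule gives for `∂F/∂z̄`,
with `∂D₀/∂z̄ = (b₀ b̄₁ - a₀ ā₁) / d₀`. -/
theorem wirtinger_quotient_identity (a0 a1 b1 b0 b2 d0 : ℂ)
    (hrel : d0 ^ 2 = b0 ^ 2 - conj a0 * a0) (hd0 : d0 ≠ 0) (hs : b0 + d0 ≠ 0) :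
    ((b2 * d0 + b1 * ((b0 * conj b1 - a0 * conj a1) / d0) + conj b1 * b1 + b0 * b2
          - 2 * conj a1 * a1) * (b0 * d0 + b0 ^ 2 - conj a0 * a0)
      - (b1 * d0 + b0 * b1 - conj a0 * a1)
        * (conj b1 * d0 + b0 * ((b0 * conj b1 - a0 * conj a1) / d0) + 2 * b0 * conj b1
          - 2 * conj a1 * a0))
      / (b0 * d0 + b0 ^ 2 - conj a0 * a0) ^ 2
    = (b2 * d0 ^ 2 - b0 * (conj a1 * a1 + conj b1 * b1) + a0 * conj a1 * b1
        + conj a0 * a1 * conj b1) / d0 ^ 3 := by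
  have hden : b0 * d0 + b0 ^ 2 - conj a0 * a0 = d0 * (b0 + d0) := by linear_combination -hrel
  rw [hden]
  field_simp
  linear_combination -(conj a1 * a1 * (2 * d0 + b0)) * hrel

theorem hasWirtingerDerivAt_F_formula {a0 a1 b1 : ℂ → ℂ} {b0 d0 : ℂ → ℝ}
    {pa1 pb0 pb1 pd0 b2 z : ℂ}
    (ha0 : HasWirtingerDerivAt a0 (2 * a1 z) 0 z) (ha1 : HasWirtingerDerivAt a1 pa1 0 z)
    (hb0 : HasWirtingerDerivAt (fun w => (b0 w : ℂ)) pb0 (conj (b1 z)) z)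
    (hb1 : HasWirtingerDerivAt b1 pb1 b2 z)
    (hd0 : HasWirtingerDerivAt (fun w => (d0 w : ℂ)) pd0
      ((b0 z * conj (b1 z) - a0 z * conj (a1 z)) / d0 z) z)
    (hrel : d0 z ^ 2 = b0 z ^ 2 - ‖a0 z‖ ^ 2) (hd0_pos : 0 < d0 z) (hb0_nonneg : 0 ≤ b0 z) :
    ∃ p, HasWirtingerDerivAt
      (fun w => (b1 w * d0 w + b0 w * b1 w - conj (a0 w) * a1 w)
        / (b0 w * d0 w + (b0 w : ℂ) ^ 2 - conj (a0 w) * a0 w)) p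
      ((b2 * d0 z ^ 2 - b0 z * (conj (a1 z) * a1 z + conj (b1 z) * b1 z)
        + a0 z * conj (a1 z) * b1 z + conj (a0 z) * a1 z * conj (b1 z)) / d0 z ^ 3) z := by
  have hrelC : (d0 z : ℂ) ^ 2 = (b0 z : ℂ) ^ 2 - conj (a0 z) * a0 z := by
    rw [conj_mul']; exact_mod_cast hrel
  have hd0_ne : (d0 z : ℂ) ≠ 0 := ofReal_ne_zero.mpr hd0_pos.ne'
  have hsum_ne : (b0 z : ℂ) + d0 z ≠ 0 := by exact_mod_cast (by positivity : 0 < b0 z + d0 z).ne'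
  have hden_ne : (b0 z : ℂ) * d0 z + (b0 z : ℂ) ^ 2 - conj (a0 z) * a0 z ≠ 0 := by
    rw [show (b0 z : ℂ) * d0 z + (b0 z : ℂ) ^ 2 - conj (a0 z) * a0 z = d0 z * (b0 z + d0 z) by
      linear_combination -hrelC]
    exact mul_ne_zero hd0_ne hsum_ne
  refine ⟨_, ((((hb1.mul hd0).add (hb0.mul hb1)).sub (ha0.conj.mul ha1)).div
    (((hb0.mul hd0).add (hb0.pow 2)).sub (ha0.conj.mul ha0)) hden_ne).congr_deriv rfl ?_⟩
  refine Eq.trans ?_ (wirtinger_quotient_identity _ _ _ _ _ _ hrelC hd0_ne hsum_ne)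
  simp only [map_mul, map_ofNat, Nat.cast_ofNat, Nat.reduceSub, pow_one]
  ring

theorem F_wirtinger_derivative_general
    {n : ℕ} (f : Fin (n + 1) → ℂ → ℂ)
    (hf_entire : ∀ j, Differentiable ℂ (f j))
    (A0 A1 B1 : ℂ → ℂ) (B0 B2 D0 : ℂ → ℝ) (F : ℂ → ℂ)
    (hA0 : ∀ z, A0 z = ∑ j, (f j z) ^ 2)
    (hA1 : ∀ z, A1 z = ∑ j, f j z * deriv (f j) z)
    (hB1 : ∀ z, B1 z = ∑ j, (starRingEnd ℂ) (f j z) * deriv (f j) z)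
    (hB0 : ∀ z, B0 z = ∑ j, ‖f j z‖ ^ 2)
    (hB2 : ∀ z, B2 z = ∑ j, ‖deriv (f j) z‖ ^ 2)
    (hD0 : ∀ z, D0 z = Real.sqrt ((B0 z) ^ 2 - ‖A0 z‖ ^ 2))
    (hF : ∀ z, F z = (B1 z * (D0 z : ℂ) + (B0 z : ℂ) * B1 z - (starRingEnd ℂ) (A0 z) * A1 z)
        / ((B0 z : ℂ) * (D0 z : ℂ) + (B0 z : ℂ) ^ 2 - (starRingEnd ℂ) (A0 z) * A0 z))
    (z : ℂ) (hz : D0 z ≠ 0) :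
    DifferentiableAt ℝ F z ∧
      (1 / 2 : ℂ) * (fderiv ℝ F z 1 + I * fderiv ℝ F z I)
        = ((B2 z : ℂ) * (D0 z : ℂ) ^ 2
            - (B0 z : ℂ) * ((‖A1 z‖ ^ 2 : ℝ) + (‖B1 z‖ ^ 2 : ℝ))
            + A0 z * (starRingEnd ℂ) (A1 z) * B1 z
            + (starRingEnd ℂ) (A0 z) * A1 z * (starRingEnd ℂ) (B1 z))
          / (D0 z : ℂ) ^ 3 := by
  have hf : ∀ j ∈ univ, DifferentiableAt ℂ (f j) z := fun j _ => (hf_entire j).differentiableAt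
  have hf' : ∀ j ∈ univ, DifferentiableAt ℂ (deriv (f j)) z :=
    fun j _ => (hf_entire j).deriv.differentiableAt
  have hA0' : HasWirtingerDerivAt A0 (2 * A1 z) 0 z := by
    rw [funext hA0, hA1]; exact hasWirtingerDerivAt_sum_sq univ hf
  have hA1' : HasWirtingerDerivAt A1 (deriv A1 z) 0 z := by
    refine DifferentiableAt.hasWirtingerDerivAt ?_
    rw [funext hA1]; fun_prop
  have hB0' : HasWirtingerDerivAt (fun w => (B0 w : ℂ)) (B1 z) (conj (B1 z)) z := by
    rw [funext hB0, hB1]; exact hasWirtingerDerivAt_ofReal_sum_norm_sq univ hf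
  obtain ⟨pB1, hB1'⟩ : ∃ p, HasWirtingerDerivAt B1 p (B2 z) z := by
    rw [funext hB1, hB2]; exact ⟨_, hasWirtingerDerivAt_sum_conj_mul_deriv univ hf hf'⟩
  have hpos : 0 < B0 z ^ 2 - ‖A0 z‖ ^ 2 := by
    by_contra! h
    exact hz (by rw [hD0, Real.sqrt_eq_zero'.mpr h])
  have hD0pos : 0 < D0 z := hD0 z ▸ Real.sqrt_pos.mpr hpos
  obtain ⟨pD0, hD0'⟩ : ∃ p, HasWirtingerDerivAt (fun w => (D0 w : ℂ)) p
      ((B0 z * conj (B1 z) - A0 z * conj (A1 z)) / D0 z) z := by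
    simp only [hD0] at hD0pos ⊢
    refine ⟨_, ((hB0'.ofReal_sq_sub_norm_sq hA0').ofReal_sqrt hpos).congr_deriv rfl ?_⟩
    simp only [map_sub, map_mul, conj_ofReal, conj_conj, map_ofNat]
    field_simp
  obtain ⟨pF, hF'⟩ := hasWirtingerDerivAt_F_formula hA0' hA1' hB0' hB1' hD0'
    (hD0 z ▸ Real.sq_sqrt hpos.le) hD0pos (hB0 z ▸ by positivity)
  rw [← funext hF] at hF'
  rw [ofReal_pow, ofReal_pow, ← conj_mul', ← conj_mul']
  exact ⟨hF'.differentiableAt, hF'.half_mul_fderiv_one_add_I_mul_fderiv_I⟩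

/-- **(Vanderbei, proof of Theorem 1 / Appendix.)** At every `z` with `D₀(z) ≠ 0`, the
function `F` is (real-)differentiable and its Wirtinger derivative `∂F/∂z̄` equals
`(B₂D₀² − B₀(|A₁|² + |B₁|²) + A₀ conj(A₁) B₁ + conj(A₀) A₁ conj(B₁)) / D₀³`. -/
theorem F_wirtinger_derivative
    {n : ℕ} (f : Fin (n + 1) → ℂ → ℂ)
    (hf_entire : ∀ j, Differentiable ℂ (f j))
    (hf_real : ∀ j, ∀ x : ℝ, (f j (x : ℂ)).im = 0)
    (A0 A1 B1 : ℂ → ℂ) (B0 B2 D0 : ℂ → ℝ) (F : ℂ → ℂ)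
    (hA0 : ∀ z, A0 z = ∑ j, (f j z) ^ 2)
    (hA1 : ∀ z, A1 z = ∑ j, f j z * deriv (f j) z)
    (hB1 : ∀ z, B1 z = ∑ j, (starRingEnd ℂ) (f j z) * deriv (f j) z)
    (hB0 : ∀ z, B0 z = ∑ j, ‖f j z‖ ^ 2)
    (hB2 : ∀ z, B2 z = ∑ j, ‖deriv (f j) z‖ ^ 2)
    (hD0 : ∀ z, D0 z = Real.sqrt ((B0 z) ^ 2 - ‖A0 z‖ ^ 2))
    (hF : ∀ z, F z = (B1 z * (D0 z : ℂ) + (B0 z : ℂ) * B1 z - (starRingEnd ℂ) (A0 z) * A1 z)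
        / ((B0 z : ℂ) * (D0 z : ℂ) + (B0 z : ℂ) ^ 2 - (starRingEnd ℂ) (A0 z) * A0 z))
    (z : ℂ) (hz : D0 z ≠ 0) :
    DifferentiableAt ℝ F z ∧
      (1 / 2 : ℂ) * (fderiv ℝ F z 1 + I * fderiv ℝ F z I)
        = ((B2 z : ℂ) * (D0 z : ℂ) ^ 2
            - (B0 z : ℂ) * ((‖A1 z‖ ^ 2 : ℝ) + (‖B1 z‖ ^ 2 : ℝ))
            + A0 z * (starRingEnd ℂ) (A1 z) * B1 z
            + (starRingEnd ℂ) (A0 z) * A1 z * (starRingEnd ℂ) (B1 z))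
          / (D0 z : ℂ) ^ 3 :=
  F_wirtinger_derivative_general f hf_entire A0 A1 B1 B0 B2 D0 F hA0 hA1 hB1 hB0 hB2 hD0 hF z hz
end

section
/- Let a be a real number. As z = x + iy → a in ℂ, the expansion B_0(z) B_1(z) − conj(A_0(z)) A_1(z) = 2i (A_1(a)² − A_0(a) A_2(a)) y + o(|z − a|) holds; that is, (B_0(z)B_1(z) − conj(A_0(z))A_1(z) − 2i(A_1(a)² − A_0(a)A_2(a)) y) / |z − a| → 0 as z → a. -/
open Complex ComplexConjugate Finset Filter Topology

/-!
Since `f_j(a)` and `f_j'(a)` are real, `F(z) = B₀(z)B₁(z) − conj(A₀(z))A₁(z)` vanishes at `a`,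
and `conj ∘ f_j` has real derivative `f_j'(a) · conj` there. By the product rule `F` is
real-differentiable at `a` with
`dF_a(v) = (A₁(a)² − A₀(a)A₂(a)) (v − conj v) = 2i (A₁(a)² − A₀(a)A₂(a)) Im v`,
so the expansion is the definition of this Fréchet derivative.
-/

theorem HasDerivAt.hasFDerivAt_conj {f : ℂ → ℂ} {f' z : ℂ} (h : HasDerivAt f f' z) :
    HasFDerivAt (fun w => conj (f w)) (conj f' • conjCLE.toContinuousLinearMap) z :=
  (conjCLE.hasFDerivAt.comp z h.complexToReal_fderiv).congr_fderiv <| by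
    ext v; simp

theorem HasDerivAt.conj_eq_of_forall_im_ofReal_eq_zero {f : ℂ → ℂ} {f' : ℂ} {a : ℝ}
    (h : HasDerivAt f f' a) (hf : ∀ x : ℝ, (f x).im = 0) : conj f' = f' := by
  have him : HasDerivAt (fun x : ℝ => (f x).im) f'.im a :=
    imCLM.hasFDerivAt.comp_hasDerivAt a h.comp_ofReal
  simp only [hf] at him
  exact conj_eq_iff_im.2 (him.unique (hasDerivAt_const a 0))

theorem HasFDerivAt.tendsto_sub_div_norm {E : Type*} [NormedAddCommGroup E] [NormedSpace ℝ E]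
    {F : E → ℂ} {L : E →L[ℝ] ℂ} {a : E} (h : HasFDerivAt F L a) :
    Tendsto (fun x => (F x - F a - L (x - a)) / (‖x - a‖ : ℂ)) (𝓝 a) (𝓝 0) :=
  (h.isLittleO.trans_isBigO (Asymptotics.isBigO_of_le _ fun x => by simp)).tendsto_div_nhds_zero

theorem hasFDerivAt_numerator {ι : Type*} [Fintype ι] {u w : ι → ℂ → ℂ} {a : ℂ}
    (hu : ∀ j, HasDerivAt (u j) (w j a) a) (hw : ∀ j, DifferentiableAt ℂ (w j) a)
    (hu_real : ∀ j, conj (u j a) = u j a) (hw_real : ∀ j, conj (w j a) = w j a) :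
    HasFDerivAt
      (fun z => (∑ j, conj (u j z) * u j z) * (∑ j, conj (u j z) * w j z)
        - (∑ j, conj (u j z) ^ 2) * ∑ j, u j z * w j z)
      (((∑ j, u j a * w j a) ^ 2 - (∑ j, u j a ^ 2) * ∑ j, w j a ^ 2) •
        (ContinuousLinearMap.id ℝ ℂ - conjCLE.toContinuousLinearMap)) a := by
  set E : ℂ →L[ℝ] ℂ := ContinuousLinearMap.id ℝ ℂ
  set J : ℂ →L[ℝ] ℂ := conjCLE.toContinuousLinearMap
  have hu' j : HasFDerivAt (u j) (w j a • E) a := (hu j).complexToReal_fderiv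
  have hw' j : HasFDerivAt (w j) (deriv (w j) a • E) a := (hw j).hasDerivAt.complexToReal_fderiv
  have hcu j : HasFDerivAt (fun z => conj (u j z)) (w j a • J) a := by
    simpa only [hw_real] using (hu j).hasFDerivAt_conj
  have hB0 := HasFDerivAt.fun_sum (u := univ) fun j _ => (hcu j).mul (hu' j)
  have hB1 := HasFDerivAt.fun_sum (u := univ) fun j _ => (hcu j).mul (hw' j)
  have hA0c := HasFDerivAt.fun_sum (u := univ) fun j _ => (hcu j).pow 2
  have hA1 := HasFDerivAt.fun_sum (u := univ) fun j _ => (hu' j).mul (hw' j)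
  refine ((hB0.mul hB1).sub (hA0c.mul hA1)).congr_fderiv ?_
  simp only [Pi.mul_apply, hu_real, smul_smul, sum_add_distrib, ← sum_smul, nsmul_eq_mul, ← sq,
    Nat.add_one_sub_one, pow_one, mul_assoc, ← mul_sum]
  module

/-- **(Vanderbei, proof of Lemma 2.)** Near a real point `a`, the expansion
`B₀(z)B₁(z) − conj(A₀(z))A₁(z) = 2i (A₁(a)² − A₀(a)A₂(a)) y + o(|z−a|)` holds, `y = Im z`. -/
theorem numerator_expansion
    {n : ℕ} (f : Fin (n + 1) → ℂ → ℂ)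
    (hf_entire : ∀ j, Differentiable ℂ (f j))
    (hf_real : ∀ j, ∀ x : ℝ, (f j (x : ℂ)).im = 0)
    (A0 A1 A2 B1 : ℂ → ℂ) (B0 : ℂ → ℝ)
    (hA0 : ∀ z, A0 z = ∑ j, (f j z) ^ 2)
    (hA1 : ∀ z, A1 z = ∑ j, f j z * deriv (f j) z)
    (hA2 : ∀ z, A2 z = ∑ j, (deriv (f j) z) ^ 2)
    (hB1 : ∀ z, B1 z = ∑ j, (starRingEnd ℂ) (f j z) * deriv (f j) z)
    (hB0 : ∀ z, B0 z = ∑ j, ‖f j z‖ ^ 2)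
    (a : ℝ) :
    Tendsto
      (fun z : ℂ =>
        (((B0 z : ℂ) * B1 z - (starRingEnd ℂ) (A0 z) * A1 z
            - 2 * I * ((A1 (a : ℂ)) ^ 2 - A0 (a : ℂ) * A2 (a : ℂ)) * (z.im : ℂ))
          / (‖z - (a : ℂ)‖ : ℝ)))
      (𝓝[{(a : ℂ)}ᶜ] (a : ℂ)) (𝓝 0) := by
  have hf' j : HasDerivAt (f j) (deriv (f j) a) a := (hf_entire j a).hasDerivAt
  have hf_real_a j : conj (f j a) = f j a := conj_eq_iff_im.2 (hf_real j a)
  have hf'_real_a j : conj (deriv (f j) a) = deriv (f j) a :=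
    (hf' j).conj_eq_of_forall_im_ofReal_eq_zero (hf_real j)
  have hlim := (hasFDerivAt_numerator hf' (fun j => (hf_entire j).deriv a) hf_real_a
    hf'_real_a).tendsto_sub_div_norm.mono_left (nhdsWithin_le_nhds (s := {(a : ℂ)}ᶜ))
  convert hlim using 2 with z
  have hB0z : (B0 z : ℂ) = ∑ j, conj (f j z) * f j z := by
    simp [hB0, conj_mul']
  simp only [hB0z, hB1, hA0, hA1, hA2, map_sum, map_pow, hf_real_a, ← sq, sub_self, sub_zero,
    smul_apply, sub_apply, ContinuousLinearMap.id_apply, ContinuousLinearEquiv.coe_coe,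
    ContinuousAlgEquiv.coeCLE_apply, conjCAE_apply, map_sub, conj_ofReal, sub_conj, ofReal_mul,
    ofReal_ofNat, smul_eq_mul]
  ring
end

section
/- For the Weyl polynomials, i.e., for the basis functions f_j(z) = z^j / √(j!), the real-zero intensity g_n(x) = √(A_2(x) A_0(x) − A_1(x)²) / (π B_0(x)) converges, for every fixed real x, to 1/π as n → ∞. -/
open Finset Filter Topology

/-! The basis `wⱼ(x) = xʲ/√(j!)` satisfies `wⱼ₊₁ = x wⱼ/√(j+1)` and `wⱼ₊₁' = √(j+1) wⱼ`, and
`∑ wⱼ² = e^{x²}` is the exponential series at `x²`. Shifting indices, the series behind `A₀, A₁, A₂`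
sum to `e^{x²}`, `x e^{x²}` and `(1 + x²) e^{x²}`, so `A₂A₀ − A₁² → e^{2x²}` and
`gₙ(x) → e^{x²}/(π e^{x²}) = 1/π`. -/

open Real
open scoped Nat

noncomputable def weylBasis (j : ℕ) (x : ℝ) : ℝ := x ^ j / √(j ! : ℝ)

lemma weylBasis_zero : weylBasis 0 = 1 := by
  ext x
  simp [weylBasis]

lemma sqrt_factorial_succ (i : ℕ) : √((i + 1)! : ℝ) = √((i : ℝ) + 1) * √(i ! : ℝ) := by
  rw [Nat.factorial_succ, Nat.cast_mul, Nat.cast_succ, sqrt_mul (by positivity)]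

lemma weylBasis_succ (i : ℕ) (x : ℝ) :
    weylBasis (i + 1) x = x * weylBasis i x / √((i : ℝ) + 1) := by
  rw [weylBasis, weylBasis, sqrt_factorial_succ, pow_succ]
  field_simp

lemma weylBasis_sq (j : ℕ) (x : ℝ) : weylBasis j x ^ 2 = (x ^ 2) ^ j / j ! := by
  rw [weylBasis, div_pow, sq_sqrt (by positivity), ← pow_mul, ← pow_mul, mul_comm]

lemma deriv_weylBasis_succ (i : ℕ) (x : ℝ) :
    deriv (weylBasis (i + 1)) x = √((i : ℝ) + 1) * weylBasis i x := by
  have hfun : weylBasis (i + 1) = fun y => y ^ (i + 1) / √((i + 1)! : ℝ) := rfl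
  rw [hfun, deriv_div_const, deriv_pow_field, sqrt_factorial_succ, weylBasis]
  push_cast
  field_simp
  rw [sq_sqrt (by positivity)]
  ring

lemma hasSum_of_hasSum_succ {G : Type*} [AddCommGroup G] [TopologicalSpace G]
    [IsTopologicalAddGroup G] {u : ℕ → G} {a : G} (h0 : u 0 = 0)
    (h : HasSum (fun i => u (i + 1)) a) : HasSum u a := by
  simpa [h0] using (hasSum_nat_add_iff 1).mp h

lemma hasSum_weylBasis_sq (x : ℝ) : HasSum (fun j => weylBasis j x ^ 2) (exp (x ^ 2)) := by
  simpa only [weylBasis_sq, exp_eq_exp_ℝ] using NormedSpace.expSeries_div_hasSum_exp (x ^ 2)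

lemma hasSum_natCast_mul_weylBasis_sq (x : ℝ) :
    HasSum (fun j => j * weylBasis j x ^ 2) (x ^ 2 * exp (x ^ 2)) := by
  refine hasSum_of_hasSum_succ (by simp)
    (((hasSum_weylBasis_sq x).mul_left (x ^ 2)).congr_fun fun i => ?_)
  rw [weylBasis_succ, div_pow, sq_sqrt (by positivity)]
  push_cast
  field_simp

lemma hasSum_weylBasis_mul_deriv (x : ℝ) :
    HasSum (fun j => weylBasis j x * deriv (weylBasis j) x) (x * exp (x ^ 2)) := by
  refine hasSum_of_hasSum_succ (by simp [weylBasis_zero])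
    (((hasSum_weylBasis_sq x).mul_left x).congr_fun fun i => ?_)
  rw [weylBasis_succ, deriv_weylBasis_succ]
  field_simp

lemma hasSum_deriv_weylBasis_sq (x : ℝ) :
    HasSum (fun j => deriv (weylBasis j) x ^ 2) ((1 + x ^ 2) * exp (x ^ 2)) := by
  rw [add_mul, one_mul]
  refine hasSum_of_hasSum_succ (by simp [weylBasis_zero])
    (((hasSum_weylBasis_sq x).add (hasSum_natCast_mul_weylBasis_sq x)).congr_fun fun i => ?_)
  rw [deriv_weylBasis_succ, mul_pow, sq_sqrt (by positivity)]
  ring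

/-- **(Vanderbei, Weyl polynomials.)** For the basis `f_j(x) = x^j/√(j!)`, the real-zero
intensity `g_n(x) = √(A₂A₀ − A₁²)/(π B₀)` tends to `1/π` as `n → ∞`, for every real `x`. -/
theorem weyl_real_intensity_tendsto
    (f : ℕ → ℝ → ℝ)
    (hf : ∀ j x, f j x = x ^ j / Real.sqrt (Nat.factorial j))
    (A0 A1 A2 B0 : ℕ → ℝ → ℝ) (g : ℕ → ℝ → ℝ)
    (hA0 : ∀ n x, A0 n x = ∑ j ∈ Finset.range (n + 1), (f j x) ^ 2)
    (hA1 : ∀ n x, A1 n x = ∑ j ∈ Finset.range (n + 1), f j x * deriv (f j) x)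
    (hA2 : ∀ n x, A2 n x = ∑ j ∈ Finset.range (n + 1), (deriv (f j) x) ^ 2)
    (hB0 : ∀ n x, B0 n x = ∑ j ∈ Finset.range (n + 1), |f j x| ^ 2)
    (hg : ∀ n x, g n x = Real.sqrt (A2 n x * A0 n x - (A1 n x) ^ 2) / (Real.pi * B0 n x))
    (x : ℝ) :
    Tendsto (fun n => g n x) atTop (𝓝 (1 / Real.pi)) := by
  obtain rfl : f = weylBasis := funext fun j => funext (hf j)
  have partial_sums {u : ℕ → ℝ} {a : ℝ} (h : HasSum u a) :
      Tendsto (fun n => ∑ j ∈ range (n + 1), u j) atTop (𝓝 a) :=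
    h.tendsto_sum_nat.comp (tendsto_add_atTop_nat 1)
  have hA0x := partial_sums (hasSum_weylBasis_sq x)
  have hA1x := partial_sums (hasSum_weylBasis_mul_deriv x)
  have hA2x := partial_sums (hasSum_deriv_weylBasis_sq x)
  have hpos : 0 < π * exp (x ^ 2) := by positivity
  have hlim := ((hA2x.mul hA0x).sub (hA1x.pow 2)).sqrt.div (hA0x.const_mul π) hpos.ne'
  have hval : √((1 + x ^ 2) * exp (x ^ 2) * exp (x ^ 2) - (x * exp (x ^ 2)) ^ 2)
      / (π * exp (x ^ 2)) = 1 / π := by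
    rw [show (1 + x ^ 2) * exp (x ^ 2) * exp (x ^ 2) - (x * exp (x ^ 2)) ^ 2
      = exp (x ^ 2) ^ 2 by ring, sqrt_sq (exp_pos _).le]
    field_simp
  rw [hval] at hlim
  simp only [hg, hA0, hA1, hA2, hB0, sq_abs]
  exact hlim
end

section
/- For the root-binomial basis f_j(z) = √(C(n,j)) z^j, the real-zero intensity simplifies to g_n(x) = (√n/π) · 1/(1+x²) for all real x; consequently, for real a < b, the expected number of real zeros of P_n(z) = ∑_{j=0}^n η_j √(C(n,j)) z^j in the interval (a,b) equals (√n/π)(arctan b − arctan a). -/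
open Finset intervalIntegral

/-! With `t = x²`, the three Kac–Rice sums are binomial sums, evaluated by absorbing the weight
`k` through `k·C(n,k) = n·C(n-1,k-1)`: `A₀ = (1+t)ⁿ`, `A₁ = n x (1+t)ⁿ⁻¹` and
`A₂ = n((n-1) t (1+t)ⁿ⁻² + (1+t)ⁿ⁻¹)`. The cross terms cancel in `A₂A₀ - A₁² = n (1+t)²⁽ⁿ⁻¹⁾`,
so `g_n = √n / (π (1+t))`, whose integral is an arctangent. -/

section BinomialSums

variable {R : Type*} [CommSemiring R]

theorem sum_range_choose_mul_pow (n : ℕ) (t : R) :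
    ∑ k ∈ range (n + 1), (n.choose k : R) * t ^ k = (1 + t) ^ n := by
  rw [add_comm 1 t, add_pow]
  exact sum_congr rfl fun k _ => by rw [one_pow, mul_one, mul_comm]

theorem sum_range_mul_choose_succ_mul (n : ℕ) (F : ℕ → R) :
    ∑ k ∈ range (n + 2), (k * (n + 1).choose k : R) * F k =
      (n + 1) * ∑ k ∈ range (n + 1), (n.choose k : R) * F (k + 1) := by
  rw [sum_range_succ', mul_sum]
  simp only [Nat.cast_zero, zero_mul, add_zero]
  refine sum_congr rfl fun k _ => ?_
  have h := congrArg (Nat.cast (R := R)) (Nat.add_one_mul_choose_eq n k)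
  push_cast at h ⊢
  rw [← mul_assoc, h]
  ring

theorem sum_range_mul_choose_mul_pow_pred (n : ℕ) (t : R) :
    ∑ k ∈ range (n + 1), (k * n.choose k : R) * t ^ (k - 1) = n * (1 + t) ^ (n - 1) := by
  cases n with
  | zero => simp
  | succ n =>
    rw [sum_range_mul_choose_succ_mul]
    simp [sum_range_choose_mul_pow]

end BinomialSums

theorem sum_range_sq_mul_choose_mul_pow_pred {R : Type*} [CommRing R] (n : ℕ) (t : R) :
    ∑ k ∈ range (n + 1), (k ^ 2 * n.choose k : R) * t ^ (k - 1) =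
      n * ((n - 1) * t * (1 + t) ^ (n - 2) + (1 + t) ^ (n - 1)) := by
  cases n with
  | zero => simp
  | succ n =>
    have hshift : ∀ k : ℕ, ((k + 1 : ℕ) : R) * t ^ k = t * (k * t ^ (k - 1)) + t ^ k := by
      rintro (_ | k)
      · simp
      · simp only [Nat.add_sub_cancel, pow_succ]
        push_cast
        ring
    calc ∑ k ∈ range (n + 2), (k ^ 2 * (n + 1).choose k : R) * t ^ (k - 1)
        = ∑ k ∈ range (n + 2), (k * (n + 1).choose k : R) * (k * t ^ (k - 1)) :=
          sum_congr rfl fun k _ => by ring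
      _ = (n + 1) * (t * ∑ k ∈ range (n + 1), (k * n.choose k : R) * t ^ (k - 1) +
            ∑ k ∈ range (n + 1), (n.choose k : R) * t ^ k) := by
          rw [sum_range_mul_choose_succ_mul]
          congr 1
          rw [mul_sum, ← sum_add_distrib]
          refine sum_congr rfl fun k _ => ?_
          rw [Nat.add_sub_cancel, hshift]; ring
      _ = _ := by
          rw [sum_range_mul_choose_mul_pow_pred, sum_range_choose_mul_pow]
          simp only [Nat.cast_add, Nat.cast_one, Nat.add_sub_cancel]
          rw [show n + 1 - 2 = n - 1 by omega]
          ring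

noncomputable def rootBinomial (n j : ℕ) (x : ℝ) : ℝ := √(n.choose j) * x ^ j

theorem deriv_rootBinomial (n j : ℕ) (x : ℝ) :
    deriv (rootBinomial n j) x = √(n.choose j) * (j * x ^ (j - 1)) := by
  change deriv (fun y => √(n.choose j) * y ^ j) x = _
  rw [deriv_const_mul_field, deriv_pow_field]

theorem sum_rootBinomial_sq (n : ℕ) (x : ℝ) :
    ∑ j ∈ range (n + 1), rootBinomial n j x ^ 2 = (1 + x ^ 2) ^ n := by
  rw [← sum_range_choose_mul_pow]
  refine sum_congr rfl fun j _ => ?_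
  rw [rootBinomial, mul_pow, Real.sq_sqrt (Nat.cast_nonneg _), ← pow_mul, ← pow_mul, mul_comm j]

theorem sum_rootBinomial_mul_deriv (n : ℕ) (x : ℝ) :
    ∑ j ∈ range (n + 1), rootBinomial n j x * deriv (rootBinomial n j) x =
      n * x * (1 + x ^ 2) ^ (n - 1) := by
  rw [mul_right_comm, ← sum_range_mul_choose_mul_pow_pred, sum_mul]
  refine sum_congr rfl fun j _ => ?_
  rw [deriv_rootBinomial, rootBinomial]
  have hc := Real.mul_self_sqrt (Nat.cast_nonneg (α := ℝ) (n.choose j))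
  rcases j with _ | j
  · simp
  · simp only [Nat.add_sub_cancel]
    push_cast
    linear_combination ((j + 1 : ℝ) * x ^ (2 * j + 1)) * hc

theorem sum_deriv_rootBinomial_sq (n : ℕ) (x : ℝ) :
    ∑ j ∈ range (n + 1), deriv (rootBinomial n j) x ^ 2 =
      n * ((n - 1) * x ^ 2 * (1 + x ^ 2) ^ (n - 2) + (1 + x ^ 2) ^ (n - 1)) := by
  rw [← sum_range_sq_mul_choose_mul_pow_pred]
  refine sum_congr rfl fun j _ => ?_
  rw [deriv_rootBinomial, mul_pow, Real.sq_sqrt (Nat.cast_nonneg _)]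
  ring

theorem rootBinomial_discriminant (n : ℕ) (t : ℝ) :
    n * ((n - 1) * t * (1 + t) ^ (n - 2) + (1 + t) ^ (n - 1)) * (1 + t) ^ n
      - t * (n * (1 + t) ^ (n - 1)) ^ 2 = n * (1 + t) ^ (2 * (n - 1)) := by
  rcases n with _ | _ | n <;> push_cast <;> ring

open Real in
theorem rootBinomial_intensity (n : ℕ) (x : ℝ) :
    √(n * (1 + x ^ 2) ^ (2 * (n - 1))) / (π * (1 + x ^ 2) ^ n) = √n / π * (1 / (1 + x ^ 2)) := by
  rcases n with _ | n
  · simp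
  · rw [Nat.add_sub_cancel, pow_mul', sqrt_mul (Nat.cast_nonneg _), sqrt_sq (by positivity),
      pow_succ]
    field_simp
    ring

theorem root_binomial_real_intensity_general
    (n : ℕ)
    (f : Fin (n + 1) → ℝ → ℝ)
    (hf : ∀ j : Fin (n + 1), ∀ x, f j x = Real.sqrt (n.choose j) * x ^ (j : ℕ))
    (A0 A1 A2 B0 g : ℝ → ℝ)
    (hA0 : ∀ x, A0 x = ∑ j, (f j x) ^ 2)
    (hA1 : ∀ x, A1 x = ∑ j, f j x * deriv (f j) x)
    (hA2 : ∀ x, A2 x = ∑ j, (deriv (f j) x) ^ 2)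
    (hB0 : ∀ x, B0 x = ∑ j, |f j x| ^ 2)
    (hg : ∀ x, g x = Real.sqrt (A2 x * A0 x - (A1 x) ^ 2) / (Real.pi * B0 x)) :
    (∀ x : ℝ, g x = (Real.sqrt n / Real.pi) * (1 / (1 + x ^ 2))) ∧
    (∀ a b : ℝ, a < b →
      ∫ x in a..b, g x = (Real.sqrt n / Real.pi) * (Real.arctan b - Real.arctan a)) := by
  have hf' : ∀ j : Fin (n + 1), f j = rootBinomial n j := fun j => funext (hf j)
  have hg' : ∀ x, g x = Real.sqrt n / Real.pi * (1 / (1 + x ^ 2)) := by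
    intro x
    rw [hg, hA0, hA1, hA2, hB0]
    simp only [sq_abs, hf', Fin.sum_univ_eq_sum_range (fun j => rootBinomial n j x ^ 2),
      Fin.sum_univ_eq_sum_range (fun j => deriv (rootBinomial n j) x ^ 2),
      Fin.sum_univ_eq_sum_range (fun j => rootBinomial n j x * deriv (rootBinomial n j) x),
      sum_rootBinomial_sq, sum_rootBinomial_mul_deriv, sum_deriv_rootBinomial_sq]
    rw [← rootBinomial_intensity, ← rootBinomial_discriminant]
    ring_nf
  refine ⟨hg', fun a b _ => ?_⟩
  rw [integral_congr fun x _ => hg' x, integral_const_mul, integral_one_div_one_add_sq]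

/-- **(Vanderbei, root-binomial polynomials.)** For the basis `f_j(x) = √(C(n,j)) x^j`, the
real-zero intensity is `g_n(x) = (√n/π)/(1+x²)`, and hence the expected number of real zeros
of `P_n` in `(a,b)` (which equals `∫_a^b g_n`) is `(√n/π)(arctan b − arctan a)`. -/
theorem root_binomial_real_intensity
    (n : ℕ) (hn : 0 < n)
    (f : Fin (n + 1) → ℝ → ℝ)
    (hf : ∀ j : Fin (n + 1), ∀ x, f j x = Real.sqrt (n.choose j) * x ^ (j : ℕ))
    (A0 A1 A2 B0 g : ℝ → ℝ)
    (hA0 : ∀ x, A0 x = ∑ j, (f j x) ^ 2)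
    (hA1 : ∀ x, A1 x = ∑ j, f j x * deriv (f j) x)
    (hA2 : ∀ x, A2 x = ∑ j, (deriv (f j) x) ^ 2)
    (hB0 : ∀ x, B0 x = ∑ j, |f j x| ^ 2)
    (hg : ∀ x, g x = Real.sqrt (A2 x * A0 x - (A1 x) ^ 2) / (Real.pi * B0 x)) :
    (∀ x : ℝ, g x = (Real.sqrt n / Real.pi) * (1 / (1 + x ^ 2))) ∧
    (∀ a b : ℝ, a < b →
      ∫ x in a..b, g x = (Real.sqrt n / Real.pi) * (Real.arctan b - Real.arctan a)) :=
  root_binomial_real_intensity_general n f hf A0 A1 A2 B0 g hA0 hA1 hA2 hB0 hg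
end

section
/- For the Fourier sine/cosine basis with n = 2m even, the real-zero intensity is constant: g_n(x) = (1/(2π)) √(n(n+1)/3) for every real x; consequently, for real a < b, the expected number of real zeros of P_n in (a,b) equals (b−a) √(n(n+1)/3) / (2π). -/
/-!
The sine and cosine of frequency `k` pair up: in the sums `A₀`, `A₁`, `A₂` such a pair contributes
`sin² + cos² = 1`, `k sin · cos − k cos · sin = 0` and `k² cos² + k² sin² = k²`, whatever `x` is.
Hence `A₀ = B₀ = m + 1`, `A₁ = 0` and `A₂ = ∑_{k ≤ m} k² = m(m+1)(2m+1)/6`, so that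
`g_n = √(m(2m+1)/6) / π = √(n(n+1)/3) / (2π)` is constant.
-/

open Finset intervalIntegral Real

theorem Finset.sum_range_two_mul_add_one {M : Type*} [AddCommMonoid M] (m : ℕ) (F : ℕ → M) :
    ∑ j ∈ range (2 * m + 1), F j = F 0 + ∑ k ∈ range m, (F (2 * k + 1) + F (2 * k + 2)) := by
  induction m with
  | zero => simp
  | succ p ih =>
    rw [show 2 * (p + 1) + 1 = 2 * p + 1 + 1 + 1 by ring, sum_range_succ, sum_range_succ, ih,
      sum_range_succ]
    abel

theorem sum_range_add_one_sq (m : ℕ) :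
    ∑ k ∈ range m, ((k : ℝ) + 1) ^ 2 = (m : ℝ) * (m + 1) * (2 * m + 1) / 6 := by
  induction m with
  | zero => simp
  | succ p ih => rw [sum_range_succ, ih]; push_cast; ring

theorem deriv_sin_const_mul (c x : ℝ) :
    deriv (fun y => sin (c * y)) x = c * cos (c * x) := by
  rw [deriv_comp_mul_left c sin x, Real.deriv_sin, smul_eq_mul]

theorem deriv_cos_const_mul (c x : ℝ) :
    deriv (fun y => cos (c * y)) x = -(c * sin (c * x)) := by
  rw [deriv_comp_mul_left c cos x, Real.deriv_cos', smul_eq_mul, mul_neg]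

structure IsFourierBasis (m : ℕ) (f : ℕ → ℝ → ℝ) : Prop where
  zero : ∀ x, f 0 x = 1
  odd : ∀ k : ℕ, 1 ≤ k → k ≤ m → ∀ x, f (2 * k - 1) x = sin ((k : ℝ) * x)
  even : ∀ k : ℕ, 1 ≤ k → k ≤ m → ∀ x, f (2 * k) x = cos ((k : ℝ) * x)

namespace IsFourierBasis

variable {m : ℕ} {f : ℕ → ℝ → ℝ}

theorem sum_range (hf : IsFourierBasis m f) (F : (ℝ → ℝ) → ℝ) :
    ∑ j ∈ range (2 * m + 1), F (f j) = F (fun _ => 1) + ∑ k ∈ range m,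
      (F (fun x => sin (((k : ℝ) + 1) * x)) + F (fun x => cos (((k : ℝ) + 1) * x))) := by
  rw [sum_range_two_mul_add_one, show f 0 = fun _ => 1 from funext hf.zero]
  refine congrArg _ (sum_congr rfl fun k hk => ?_)
  have hk : k + 1 ≤ m := mem_range.mp hk
  have hsin : f (2 * k + 1) = fun x => sin (((k : ℝ) + 1) * x) := funext fun x => by
    have := hf.odd (k + 1) (by omega) hk x
    rwa [show 2 * (k + 1) - 1 = 2 * k + 1 by omega, Nat.cast_succ] at this
  have hcos : f (2 * k + 2) = fun x => cos (((k : ℝ) + 1) * x) := funext fun x => by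
    have := hf.even (k + 1) (by omega) hk x
    rwa [Nat.cast_succ] at this
  rw [hsin, hcos]

theorem sum_sq (hf : IsFourierBasis m f) (x : ℝ) :
    ∑ j ∈ range (2 * m + 1), f j x ^ 2 = m + 1 := by
  rw [hf.sum_range (fun φ => φ x ^ 2)]
  simp [add_comm]

theorem sum_mul_deriv (hf : IsFourierBasis m f) (x : ℝ) :
    ∑ j ∈ range (2 * m + 1), f j x * deriv (f j) x = 0 := by
  rw [hf.sum_range (fun φ => φ x * deriv φ x)]
  simp only [deriv_const, mul_zero, deriv_sin_const_mul, deriv_cos_const_mul, zero_add]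
  exact sum_eq_zero fun k _ => by ring

theorem sum_deriv_sq (hf : IsFourierBasis m f) (x : ℝ) :
    ∑ j ∈ range (2 * m + 1), deriv (f j) x ^ 2 = m * (m + 1) * (2 * m + 1) / 6 := by
  rw [hf.sum_range (fun φ => deriv φ x ^ 2), ← sum_range_add_one_sq]
  simp only [deriv_const, deriv_sin_const_mul, deriv_cos_const_mul]
  rw [zero_pow two_ne_zero, zero_add]
  refine sum_congr rfl fun k _ => ?_
  linear_combination ((k : ℝ) + 1) ^ 2 * sin_sq_add_cos_sq (((k : ℝ) + 1) * x)

end IsFourierBasis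

theorem sqrt_squarePyramidal_mul_div_eq (M : ℝ) (hM : 0 < M + 1) :
    √(M * (M + 1) * (2 * M + 1) / 6 * (M + 1)) / (π * (M + 1))
      = 1 / (2 * π) * √(2 * M * (2 * M + 1) / 3) := by
  rw [show M * (M + 1) * (2 * M + 1) / 6 * (M + 1) = (M + 1) ^ 2 * (M * (2 * M + 1) / 6) by ring,
    show 2 * M * (2 * M + 1) / 3 = 2 ^ 2 * (M * (2 * M + 1) / 6) by ring,
    sqrt_mul (sq_nonneg _), sqrt_mul (sq_nonneg _), sqrt_sq hM.le, sqrt_sq zero_le_two]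
  field_simp

theorem fourier_real_intensity_constant_general
    (m : ℕ) (n : ℕ) (hn : n = 2 * m)
    (f : ℕ → ℝ → ℝ)
    (hf0 : ∀ x, f 0 x = 1)
    (hfodd : ∀ k : ℕ, 1 ≤ k → k ≤ m → ∀ x, f (2 * k - 1) x = Real.sin ((k : ℝ) * x))
    (hfeven : ∀ k : ℕ, 1 ≤ k → k ≤ m → ∀ x, f (2 * k) x = Real.cos ((k : ℝ) * x))
    (A0 A1 A2 B0 g : ℝ → ℝ)
    (hA0 : ∀ x, A0 x = ∑ j ∈ Finset.range (n + 1), (f j x) ^ 2)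
    (hA1 : ∀ x, A1 x = ∑ j ∈ Finset.range (n + 1), f j x * deriv (f j) x)
    (hA2 : ∀ x, A2 x = ∑ j ∈ Finset.range (n + 1), (deriv (f j) x) ^ 2)
    (hB0 : ∀ x, B0 x = ∑ j ∈ Finset.range (n + 1), |f j x| ^ 2)
    (hg : ∀ x, g x = Real.sqrt (A2 x * A0 x - (A1 x) ^ 2) / (Real.pi * B0 x)) :
    (∀ x : ℝ, g x = (1 / (2 * Real.pi)) * Real.sqrt ((n : ℝ) * ((n : ℝ) + 1) / 3)) ∧
    (∀ a b : ℝ, a < b →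
      ∫ x in a..b, g x = (b - a) * Real.sqrt ((n : ℝ) * ((n : ℝ) + 1) / 3) / (2 * Real.pi)) := by
  subst hn
  have hf : IsFourierBasis m f := ⟨hf0, hfodd, hfeven⟩
  have hg_const : ∀ x, g x = 1 / (2 * π) * √(((2 * m : ℕ) : ℝ) * ((2 * m : ℕ) + 1) / 3) := by
    intro x
    have hB0_eq : B0 x = A0 x := by simp only [hB0, hA0, sq_abs]
    rw [hg, hB0_eq, hA0, hA1, hA2, hf.sum_sq, hf.sum_mul_deriv, hf.sum_deriv_sq,
      zero_pow two_ne_zero, sub_zero, sqrt_squarePyramidal_mul_div_eq _ (by positivity)]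
    push_cast
    ring_nf
  refine ⟨hg_const, fun a b _ => ?_⟩
  rw [integral_congr fun x _ => hg_const x, integral_const, smul_eq_mul]
  ring

/-- **(Vanderbei, Fourier sine/cosine series.)** For the sine/cosine basis with `n = 2m`, the
real-zero intensity is constant, `g_n(x) = (1/(2π))√(n(n+1)/3)`, so the expected number of
real zeros in `(a,b)` (which equals `∫_a^b g_n`) is `(b−a)√(n(n+1)/3)/(2π)`. -/
theorem fourier_real_intensity_constant
    (m : ℕ) (hm : 0 < m) (n : ℕ) (hn : n = 2 * m)
    (f : ℕ → ℝ → ℝ)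
    (hf0 : ∀ x, f 0 x = 1)
    (hfodd : ∀ k : ℕ, 1 ≤ k → k ≤ m → ∀ x, f (2 * k - 1) x = Real.sin ((k : ℝ) * x))
    (hfeven : ∀ k : ℕ, 1 ≤ k → k ≤ m → ∀ x, f (2 * k) x = Real.cos ((k : ℝ) * x))
    (A0 A1 A2 B0 g : ℝ → ℝ)
    (hA0 : ∀ x, A0 x = ∑ j ∈ Finset.range (n + 1), (f j x) ^ 2)
    (hA1 : ∀ x, A1 x = ∑ j ∈ Finset.range (n + 1), f j x * deriv (f j) x)
    (hA2 : ∀ x, A2 x = ∑ j ∈ Finset.range (n + 1), (deriv (f j) x) ^ 2)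
    (hB0 : ∀ x, B0 x = ∑ j ∈ Finset.range (n + 1), |f j x| ^ 2)
    (hg : ∀ x, g x = Real.sqrt (A2 x * A0 x - (A1 x) ^ 2) / (Real.pi * B0 x)) :
    (∀ x : ℝ, g x = (1 / (2 * Real.pi)) * Real.sqrt ((n : ℝ) * ((n : ℝ) + 1) / 3)) ∧
    (∀ a b : ℝ, a < b →
      ∫ x in a..b, g x = (b - a) * Real.sqrt ((n : ℝ) * ((n : ℝ) + 1) / 3) / (2 * Real.pi)) :=
  fourier_real_intensity_constant_general m n hn f hf0 hfodd hfeven A0 A1 A2 B0 g hA0 hA1 hA2 hB0 hg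
end
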